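/- Let k ∈ ℕ, p > 2, and let (x_j)_{j∈J} be the family in ℂ² consisting of k copies of (k^{−1/2}, 0), k copies of (0, k^{−1/2}), and the four vectors (1,1), (1,−1), (1,i), (1,−i). Then for x = (1,0) and y = (0,1) one has Σ_{j∈J} ||⟨x, x_j⟩| − |⟨y, x_j⟩||^p = 2k^{1−p/2} and min_{|λ|=1} ‖x − λy‖ = 2^{1/2−1/p} k^{1/2−1/p} (Σ_{j∈J} ||⟨x, x_j⟩| − |⟨y, x_j⟩||^p)^{1/p}. Consequently, if C_p < (2k)^{1/2−1/p} then (x_j)_{j∈J} does not do C_p-stable phase retrieval in ℓ_p(J). -/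

import Mathlib

open scoped ComplexInnerProductSpace
open Complex

/-- The vector `(a, b)` in `ℂ²`. -/
noncomputable def vec2 (a b : ℂ) : EuclideanSpace ℂ (Fin 2) :=
  (WithLp.equiv 2 (Fin 2 → ℂ)).symm ![a, b]

/-- The family in `ℂ²` consisting of `k` copies of `(k^{-1/2}, 0)`, `k` copies of
`(0, k^{-1/2})`, and the four vectors `(1,1), (1,-1), (1,i), (1,-i)`. -/
noncomputable def exFrame (k : ℕ) : Fin k ⊕ Fin k ⊕ Fin 4 → EuclideanSpace ℂ (Fin 2) :=
  Sum.elim (fun _ => vec2 (((Real.sqrt k)⁻¹ : ℝ) : ℂ) 0)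
    (Sum.elim (fun _ => vec2 0 (((Real.sqrt k)⁻¹ : ℝ) : ℂ))
      ![vec2 1 1, vec2 1 (-1), vec2 1 I, vec2 1 (-I)])

lemma inner_vec2 (a b c d : ℂ) :
    ⟪vec2 a b, vec2 c d⟫ = starRingEnd ℂ a * c + starRingEnd ℂ b * d := by
  simp [vec2, PiLp.inner_apply, Fin.sum_univ_two]
  ring

lemma sum_eq_aux (k : ℕ) (hk : 0 < k) (p : ℝ) (hp : 2 < p) :
    ∑ j, |‖⟪vec2 1 0, exFrame k j⟫‖ - ‖⟪vec2 0 1, exFrame k j⟫‖| ^ p =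
      2 * (k : ℝ) ^ (1 - p / 2) := by
  have hk0 : (0:ℝ) < k := Nat.cast_pos.mpr hk
  have hterm : ((Real.sqrt k)⁻¹ : ℝ) ^ p = (k:ℝ) ^ (-(p/2)) := by
    rw [Real.sqrt_eq_rpow, ← Real.rpow_neg hk0.le, ← Real.rpow_mul hk0.le]
    congr 1; ring
  have hnn : (0:ℝ) ≤ (Real.sqrt k)⁻¹ := by positivity
  rw [Fintype.sum_sum_type, Fintype.sum_sum_type]
  have h1 : ∀ i : Fin k, |‖⟪vec2 1 0, exFrame k (Sum.inl i)⟫‖ -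
      ‖⟪vec2 0 1, exFrame k (Sum.inl i)⟫‖| ^ p = (k:ℝ) ^ (-(p/2)) := by
    intro i
    simp [exFrame, inner_vec2, Complex.norm_real, _root_.abs_of_nonneg hnn, abs_inv,
      _root_.abs_of_nonneg (Real.sqrt_nonneg (k:ℝ)), hterm]
  have h2 : ∀ i : Fin k, |‖⟪vec2 1 0, exFrame k (Sum.inr (Sum.inl i))⟫‖ -
      ‖⟪vec2 0 1, exFrame k (Sum.inr (Sum.inl i))⟫‖| ^ p = (k:ℝ) ^ (-(p/2)) := by
    intro i
    simp [exFrame, inner_vec2, Complex.norm_real, _root_.abs_of_nonneg hnn, abs_inv,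
      _root_.abs_of_nonneg (Real.sqrt_nonneg (k:ℝ)), hterm]
  have h3 : ∀ i : Fin 4, |‖⟪vec2 1 0, exFrame k (Sum.inr (Sum.inr i))⟫‖ -
      ‖⟪vec2 0 1, exFrame k (Sum.inr (Sum.inr i))⟫‖| ^ p = 0 := by
    intro i
    fin_cases i <;>
      simp [exFrame, inner_vec2, Real.zero_rpow (by linarith : p ≠ 0)]
  simp only [h1, h2, h3, Finset.sum_const, Finset.card_univ, Fintype.card_fin,
    nsmul_eq_mul, Finset.sum_const_zero, add_zero]
  rw [show (1:ℝ) - p/2 = 1 + -(p/2) by ring, Real.rpow_add hk0, Real.rpow_one]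
  ring

lemma norm_const_aux (c : ℂ) (hc : ‖c‖ = 1) :
    ‖vec2 1 0 - c • vec2 0 1‖ = Real.sqrt 2 := by
  rw [EuclideanSpace.norm_eq]
  congr 1
  rw [Fin.sum_univ_two]
  have h0 : (vec2 1 0 - c • vec2 0 1) 0 = 1 := by simp [vec2]
  have h1 : (vec2 1 0 - c • vec2 0 1) 1 = -c := by simp [vec2]
  rw [h0, h1]
  simp [hc]
  norm_num

lemma inf_eq_aux :
    (⨅ lam : {c : ℂ // ‖c‖ = 1}, ‖vec2 1 0 - (lam : ℂ) • vec2 0 1‖) = Real.sqrt 2 := by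
  have : Nonempty {c : ℂ // ‖c‖ = 1} := ⟨⟨1, norm_one⟩⟩
  have h : (fun lam : {c : ℂ // ‖c‖ = 1} => ‖vec2 1 0 - (lam : ℂ) • vec2 0 1‖)
      = fun _ => Real.sqrt 2 := funext fun lam => norm_const_aux lam lam.2
  rw [h, ciInf_const]

lemma rhs_eq_aux (k : ℕ) (hk : 0 < k) (p : ℝ) (hp : 2 < p) :
    Real.sqrt 2 = 2 ^ (1 / 2 - 1 / p) * (k : ℝ) ^ (1 / 2 - 1 / p) *
      (2 * (k : ℝ) ^ (1 - p / 2)) ^ (1 / p) := by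
  have hk0 : (0:ℝ) < k := Nat.cast_pos.mpr hk
  have hp0 : (0:ℝ) < p := by linarith
  rw [Real.mul_rpow (by norm_num) (Real.rpow_nonneg hk0.le _),
    ← Real.rpow_mul hk0.le, Real.sqrt_eq_rpow]
  rw [mul_mul_mul_comm, ← Real.rpow_add (by norm_num : (0:ℝ) < 2), ← Real.rpow_add hk0]
  have e1 : 1 / 2 - 1 / p + 1 / p = (1:ℝ)/2 := by ring
  have e2 : 1 / 2 - 1 / p + (1 - p / 2) * (1 / p) = 0 := by field_simp; ring
  rw [e1, e2, Real.rpow_zero, mul_one]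

/-- For `u = (1,0)` and `v = (0,1)` one has
`∑ⱼ ||⟨u,xⱼ⟩| - |⟨v,xⱼ⟩||^p = 2k^{1-p/2}` and
`min_{|λ|=1} ‖u - λv‖ = 2^{1/2-1/p} k^{1/2-1/p} (∑ⱼ ||⟨u,xⱼ⟩| - |⟨v,xⱼ⟩||^p)^{1/p}`;
consequently, if `C_p < (2k)^{1/2-1/p}` then `exFrame k` does not do `C_p`-stable phase
retrieval in `ℓ_p`. -/
theorem stmt_15 (k : ℕ) (hk : 0 < k) (p : ℝ) (hp : 2 < p) :
    (∑ j, |‖⟪vec2 1 0, exFrame k j⟫‖ - ‖⟪vec2 0 1, exFrame k j⟫‖| ^ p =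
      2 * (k : ℝ) ^ (1 - p / 2)) ∧
    ((⨅ lam : {c : ℂ // ‖c‖ = 1}, ‖vec2 1 0 - (lam : ℂ) • vec2 0 1‖) =
      2 ^ (1 / 2 - 1 / p) * (k : ℝ) ^ (1 / 2 - 1 / p) *
        (∑ j, |‖⟪vec2 1 0, exFrame k j⟫‖ - ‖⟪vec2 0 1, exFrame k j⟫‖| ^ p) ^ (1 / p)) ∧
    (∀ Cp : ℝ, Cp < (2 * (k : ℝ)) ^ (1 / 2 - 1 / p) →
      ¬ (∀ u v : EuclideanSpace ℂ (Fin 2),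
        (⨅ lam : {c : ℂ // ‖c‖ = 1}, ‖u - (lam : ℂ) • v‖) ≤
          Cp * (∑ j, |‖⟪u, exFrame k j⟫‖ - ‖⟪v, exFrame k j⟫‖| ^ p) ^ (1 / p))) := by
  have hk0 : (0:ℝ) < k := Nat.cast_pos.mpr hk
  have hsum := sum_eq_aux k hk p hp
  have hinf := inf_eq_aux
  have hrhs := rhs_eq_aux k hk p hp
  refine ⟨hsum, by rw [hinf, hsum]; exact hrhs, ?_⟩
  intro Cp hCp H
  have hS : (0:ℝ) < (∑ j, |‖⟪vec2 1 0, exFrame k j⟫‖ -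
      ‖⟪vec2 0 1, exFrame k j⟫‖| ^ p) ^ (1 / p) := by
    rw [hsum]; positivity
  have h2k : ((2:ℝ) * k) ^ (1 / 2 - 1 / p) *
      (∑ j, |‖⟪vec2 1 0, exFrame k j⟫‖ - ‖⟪vec2 0 1, exFrame k j⟫‖| ^ p) ^ (1 / p)
      = Real.sqrt 2 := by
    rw [hsum, Real.mul_rpow (by norm_num) hk0.le]
    exact hrhs.symm
  have hle := H (vec2 1 0) (vec2 0 1)
  rw [hinf, ← h2k] at hle
  have := mul_lt_mul_of_pos_right hCp hS
  linarith
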